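/- (Soundness of the logic of promotional marketing) For any finite set 𝒜 and any formula φ ∈ Φ(𝒜): if φ is derivable in the promotional proof system (⊢ φ), then N ⊨ φ under the promotional semantics for every social network N = (𝒜, w, λ, θ). -/
import Mathlib


open scoped BigOperators Classical

/-- A social network on a (finite) set of agents: influence weights `w` (non-negative),
propensity `lam` and threshold `thr`. -/
structure SocialNetwork (Agent : Type) where
  w : Agent → Agent → ℝ
  w_nonneg : ∀ a b, 0 ≤ w a b
  lam : Agent → ℝ
  thr : Agent → ℝ

/-- A spending function maps each agent to a non-negative real. -/
def IsSpending {Agent : Type} (s : Agent → ℝ) : Prop := ∀ a, 0 ≤ s a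

/-- The diffusion chain `Aⁿ_s`: `A⁰_s = A` and
`Aⁿ⁺¹_s = Aⁿ_s ∪ { b : λ(b)·s(b) + Σ_{a∈Aⁿ_s} w(a,b) ≥ θ(b) }`. -/
noncomputable def diffuse {Agent : Type} [Fintype Agent] (N : SocialNetwork Agent)
    (s : Agent → ℝ) (A : Set Agent) : ℕ → Set Agent
  | 0 => A
  | n + 1 =>
      diffuse N s A n ∪
        {b : Agent |
          N.lam b * s b +
              ∑ a ∈ Finset.univ.filter (fun a => a ∈ diffuse N s A n), N.w a b ≥
            N.thr b}

/-- `A*_s = ⋃_{n ≥ 0} Aⁿ_s`. -/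
noncomputable def diffuseStar {Agent : Type} [Fintype Agent] (N : SocialNetwork Agent)
    (s : Agent → ℝ) (A : Set Agent) : Set Agent :=
  ⋃ n : ℕ, diffuse N s A n

/-- `‖s‖ = Σ_{a ∈ 𝒜} s(a)`. -/
noncomputable def budget {Agent : Type} [Fintype Agent] (s : Agent → ℝ) : ℝ :=
  ∑ a, s a

/-- The combination `s₁ ⊕_λ s₂` of two spending functions. -/
noncomputable def oplus {Agent : Type} (lam : Agent → ℝ) (s₁ s₂ : Agent → ℝ) :
    Agent → ℝ :=
  fun a => if 0 ≤ lam a then s₁ a + s₂ a else 0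

/-- The language `Φ(𝒜)`: atoms `A ▷_p B` (with `A B ⊆ 𝒜` and `p` a non-negative real),
closed under negation and implication. -/
inductive Formula (Agent : Type) : Type where
  | atom : Set Agent → NNReal → Set Agent → Formula Agent
  | neg : Formula Agent → Formula Agent
  | imp : Formula Agent → Formula Agent → Formula Agent

/-- Evaluation of a formula under a propositional valuation of its atoms. -/
def evalWith {Agent : Type} (v : Set Agent → NNReal → Set Agent → Prop) :
    Formula Agent → Prop
  | .atom A p B => v A p B
  | .neg φ => ¬ evalWith v φ
  | .imp φ ψ => evalWith v φ → evalWith v ψ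

/-- A propositional tautology in the language `Φ(𝒜)`. -/
def Tautology {Agent : Type} (φ : Formula Agent) : Prop :=
  ∀ v : Set Agent → NNReal → Set Agent → Prop, evalWith v φ

/-- Promotional satisfaction relation `N ⊨ φ`. -/
def PromoSatisfies {Agent : Type} [Fintype Agent] (N : SocialNetwork Agent) :
    Formula Agent → Prop
  | .atom A p B =>
      ∃ s : Agent → ℝ, IsSpending s ∧ budget s ≤ (p : ℝ) ∧ B ⊆ diffuseStar N s A
  | .neg φ => ¬ PromoSatisfies N φ
  | .imp φ ψ => PromoSatisfies N φ → PromoSatisfies N ψ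

/-- Preventive satisfaction relation `N ⊨ φ`. -/
def PrevSatisfies {Agent : Type} [Fintype Agent] (N : SocialNetwork Agent) :
    Formula Agent → Prop
  | .atom A p B =>
      ∀ s : Agent → ℝ, IsSpending s → budget s ≤ (p : ℝ) → B ⊆ diffuseStar N s A
  | .neg φ => ¬ PrevSatisfies N φ
  | .imp φ ψ => PrevSatisfies N φ → PrevSatisfies N ψ

/-- Derivability `⊢ φ` in the proof system for promotional marketing:
propositional tautologies, Reflexivity, Augmentation, Transitivity, Modus Ponens. -/
inductive PromoDeriv {Agent : Type} : Formula Agent → Prop where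
  | taut {φ : Formula Agent} : Tautology φ → PromoDeriv φ
  | refl {A B : Set Agent} (p : NNReal) (h : B ⊆ A) : PromoDeriv (.atom A p B)
  | aug (A B C : Set Agent) (p : NNReal) :
      PromoDeriv (.imp (.atom A p B) (.atom (A ∪ C) p (B ∪ C)))
  | trans (A B C : Set Agent) (p q : NNReal) :
      PromoDeriv (.imp (.atom A p B) (.imp (.atom B q C) (.atom A (p + q) C)))
  | mp {φ ψ : Formula Agent} : PromoDeriv (.imp φ ψ) → PromoDeriv φ → PromoDeriv ψ

/-- Derivability `⊢ φ` in the proof system for preventive marketing: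
propositional tautologies, Reflexivity, Augmentation, Transitivity, Monotonicity,
Modus Ponens. -/
inductive PrevDeriv {Agent : Type} : Formula Agent → Prop where
  | taut {φ : Formula Agent} : Tautology φ → PrevDeriv φ
  | refl {A B : Set Agent} (p : NNReal) (h : B ⊆ A) : PrevDeriv (.atom A p B)
  | aug (A B C : Set Agent) (p : NNReal) :
      PrevDeriv (.imp (.atom A p B) (.atom (A ∪ C) p (B ∪ C)))
  | trans (A B C : Set Agent) (p : NNReal) :
      PrevDeriv (.imp (.atom A p B) (.imp (.atom B p C) (.atom A p C)))
  | mono (A B : Set Agent) {p q : NNReal} (h : q ≤ p) :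
      PrevDeriv (.imp (.atom A p B) (.atom A q B))
  | mp {φ ψ : Formula Agent} : PrevDeriv (.imp φ ψ) → PrevDeriv φ → PrevDeriv ψ

/-- Transport of a formula along a map of agents (inclusion of `𝒜₀` into `𝒜`). -/
def Formula.map {α β : Type} (f : α → β) : Formula α → Formula β
  | .atom A p B => .atom (f '' A) p (f '' B)
  | .neg φ => .neg (Formula.map f φ)
  | .imp φ ψ => .imp (Formula.map f φ) (Formula.map f ψ)

lemma evalWith_promo {Agent : Type} [Fintype Agent] (N : SocialNetwork Agent)
    (φ : Formula Agent) :
    evalWith (fun A p B => PromoSatisfies N (.atom A p B)) φ ↔ PromoSatisfies N φ := by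
  induction φ with
  | atom A p B => rfl
  | neg φ ih => exact not_congr ih
  | imp φ ψ ih1 ih2 => exact imp_congr ih1 ih2

/-- Monotonicity of the diffusion chain in the initial set and in the
`λ·s`-dominance order on spending. -/
lemma diffuse_mono {Agent : Type} [Fintype Agent] (N : SocialNetwork Agent)
    {s s' : Agent → ℝ} (hs : ∀ b, N.lam b * s b ≤ N.lam b * s' b)
    {A A' : Set Agent} (hA : A ⊆ A') :
    ∀ n, diffuse N s A n ⊆ diffuse N s' A' n := by
  intro n
  induction n with
  | zero => exact hA
  | succ n ih =>
    intro b hb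
    rcases hb with hb | hb
    · exact Or.inl (ih hb)
    · refine Or.inr ?_
      simp only [Set.mem_setOf_eq, ge_iff_le] at hb ⊢
      refine le_trans hb (add_le_add (hs b) ?_)
      apply Finset.sum_le_sum_of_subset_of_nonneg
      · intro a ha
        simp only [Finset.mem_filter, Finset.mem_univ, true_and] at ha ⊢
        exact ih ha
      · intro a _ _; exact N.w_nonneg a b

lemma diffuse_mono_nat {Agent : Type} [Fintype Agent] (N : SocialNetwork Agent)
    (s : Agent → ℝ) (A : Set Agent) {m n : ℕ} (h : m ≤ n) :
    diffuse N s A m ⊆ diffuse N s A n := by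
  induction h with
  | refl => exact subset_rfl
  | step h ih => exact ih.trans (by intro b hb; exact Or.inl hb)

lemma subset_star_exists {Agent : Type} [Fintype Agent] (N : SocialNetwork Agent)
    (s : Agent → ℝ) (A : Set Agent) {C : Set Agent}
    (hC : C ⊆ diffuseStar N s A) : ∃ n, C ⊆ diffuse N s A n := by
  classical
  have : ∀ b : Agent, ∃ n, b ∈ C → b ∈ diffuse N s A n := by
    intro b
    by_cases hb : b ∈ C
    · obtain ⟨_, ⟨n, rfl⟩, hn⟩ := hC hb
      exact ⟨n, fun _ => hn⟩
    · exact ⟨0, fun h => absurd h hb⟩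
  choose f hf using this
  refine ⟨Finset.univ.sup f, fun b hb => ?_⟩
  exact diffuse_mono_nat N s A (Finset.le_sup (Finset.mem_univ b)) (hf b hb)

lemma star_trans {Agent : Type} [Fintype Agent] (N : SocialNetwork Agent)
    {s₂ s : Agent → ℝ} (hs : ∀ b, N.lam b * s₂ b ≤ N.lam b * s b)
    {A B : Set Agent} (hB : B ⊆ diffuseStar N s A) :
    diffuseStar N s₂ B ⊆ diffuseStar N s A := by
  obtain ⟨n₀, hn₀⟩ := subset_star_exists N s A hB
  have key : ∀ m, diffuse N s₂ B m ⊆ diffuse N s A (n₀ + m) := by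
    intro m
    induction m with
    | zero => exact hn₀
    | succ m ih =>
      intro b hb
      rcases hb with hb | hb
      · exact diffuse_mono_nat N s A (Nat.le_succ _) (ih hb)
      · refine Or.inr ?_
        simp only [Set.mem_setOf_eq, ge_iff_le] at hb ⊢
        refine le_trans hb (add_le_add (hs b) ?_)
        apply Finset.sum_le_sum_of_subset_of_nonneg
        · intro a ha
          simp only [Finset.mem_filter, Finset.mem_univ, true_and] at ha ⊢
          exact ih ha
        · intro a _ _; exact N.w_nonneg a b
  intro b hb
  obtain ⟨_, ⟨m, rfl⟩, hm⟩ := hb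
  exact Set.mem_iUnion.2 ⟨n₀ + m, key m hm⟩

/-- Soundness of the logic of promotional marketing. -/
theorem promo_soundness {Agent : Type} [Fintype Agent] (φ : Formula Agent)
    (h : PromoDeriv φ) :
    ∀ N : SocialNetwork Agent, PromoSatisfies N φ := by
  intro N
  induction h with
  | taut ht => exact (evalWith_promo N _).1 (ht _)
  | refl p hBA =>
    refine ⟨fun _ => 0, fun a => le_refl 0, ?_, ?_⟩
    · simp [budget, NNReal.coe_nonneg]
    · exact fun b hb => Set.mem_iUnion.2 ⟨0, hBA hb⟩
  | aug A B C p =>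
    rintro ⟨s, hs, hbud, hsub⟩
    refine ⟨s, hs, hbud, ?_⟩
    intro b hb
    rcases hb with hb | hb
    · obtain ⟨_, ⟨n, rfl⟩, hn⟩ := hsub hb
      exact Set.mem_iUnion.2 ⟨n, diffuse_mono N (fun b => le_refl _)
        (Set.subset_union_left) n hn⟩
    · exact Set.mem_iUnion.2 ⟨0, Or.inr hb⟩
  | trans A B C p q =>
    rintro ⟨s₁, hs₁, hb₁, hsub₁⟩ ⟨s₂, hs₂, hb₂, hsub₂⟩
    refine ⟨oplus N.lam s₁ s₂, ?_, ?_, ?_⟩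
    · intro a
      unfold oplus
      split
      · exact add_nonneg (hs₁ a) (hs₂ a)
      · exact le_refl 0
    · calc budget (oplus N.lam s₁ s₂) ≤ budget s₁ + budget s₂ := by
            rw [budget, budget, budget, ← Finset.sum_add_distrib]
            apply Finset.sum_le_sum
            intro a _
            unfold oplus
            split
            · exact le_refl _
            · exact add_nonneg (hs₁ a) (hs₂ a)
        _ ≤ (p : ℝ) + (q : ℝ) := add_le_add hb₁ hb₂
        _ = ((p + q : NNReal) : ℝ) := by push_cast; ring
    · have dom : ∀ s' : Agent → ℝ, IsSpending s' →
          (∀ a, s' a ≤ s₁ a + s₂ a) →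
          ∀ b, N.lam b * s' b ≤ N.lam b * oplus N.lam s₁ s₂ b := by
        intro s' hsp hle b
        unfold oplus
        split
        · next h => exact mul_le_mul_of_nonneg_left (hle b) h
        · next h =>
          push_neg at h
          simp only [mul_zero]
          exact mul_nonpos_of_nonpos_of_nonneg h.le (hsp b)
      have dom₁ : ∀ b, N.lam b * s₁ b ≤ N.lam b * oplus N.lam s₁ s₂ b :=
        dom s₁ hs₁ (fun a => le_add_of_nonneg_right (hs₂ a))
      have dom₂ : ∀ b, N.lam b * s₂ b ≤ N.lam b * oplus N.lam s₁ s₂ b :=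
        dom s₂ hs₂ (fun a => le_add_of_nonneg_left (hs₁ a))
      have hB : B ⊆ diffuseStar N (oplus N.lam s₁ s₂) A := by
        intro b hb
        obtain ⟨_, ⟨n, rfl⟩, hn⟩ := hsub₁ hb
        exact Set.mem_iUnion.2 ⟨n, diffuse_mono N dom₁ subset_rfl n hn⟩
      refine hsub₂.trans (?_ : diffuseStar N s₂ B ⊆ _)
      exact star_trans N dom₂ hB
  | mp _ _ ih1 ih2 => exact ih1 ih2
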